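/- arXiv:2203.10762 — 3 statements merged into one kernel-verified Lean document; each statement's English description precedes it below -/
import Mathlib

section
/- If u : ℝ → ℝ is concave, then the map ξ ↦ M_u(ξ) is concave: for all random variables ξ₁, ξ₂ (with relevant expectations finite) and λ ∈ (0,1), M_u(λξ₁ + (1-λ)ξ₂) ≥ λ M_u(ξ₁) + (1-λ) M_u(ξ₂). -/
open MeasureTheory

theorem stmt3 {Ω : Type*} [MeasurableSpace Ω] (μ : Measure Ω) [IsProbabilityMeasure μ]
    (u : ℝ → ℝ) (hu : ConcaveOn ℝ Set.univ u) (ξ₁ ξ₂ : Ω → ℝ) (lam : ℝ)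
    (hlam : lam ∈ Set.Ioo (0:ℝ) 1)
    (hint₁ : ∀ x : ℝ, Integrable (fun ω => u (ξ₁ ω - x)) μ)
    (hint₂ : ∀ x : ℝ, Integrable (fun ω => u (ξ₂ ω - x)) μ)
    (hintc : ∀ x : ℝ, Integrable (fun ω => u (lam * ξ₁ ω + (1 - lam) * ξ₂ ω - x)) μ)
    (hbdd₁ : BddAbove {y : ℝ | ∃ x : ℝ, y = u x + ∫ ω, u (ξ₁ ω - x) ∂μ})
    (hbdd₂ : BddAbove {y : ℝ | ∃ x : ℝ, y = u x + ∫ ω, u (ξ₂ ω - x) ∂μ})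
    (hbddc : BddAbove {y : ℝ | ∃ x : ℝ,
        y = u x + ∫ ω, u (lam * ξ₁ ω + (1 - lam) * ξ₂ ω - x) ∂μ}) :
    sSup {y : ℝ | ∃ x : ℝ, y = u x + ∫ ω, u (lam * ξ₁ ω + (1 - lam) * ξ₂ ω - x) ∂μ} ≥
      lam * sSup {y : ℝ | ∃ x : ℝ, y = u x + ∫ ω, u (ξ₁ ω - x) ∂μ} +
        (1 - lam) * sSup {y : ℝ | ∃ x : ℝ, y = u x + ∫ ω, u (ξ₂ ω - x) ∂μ} := by
  obtain ⟨hl0, hl1⟩ := hlam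
  have hl1' : (0:ℝ) < 1 - lam := by linarith
  set S := sSup {y : ℝ | ∃ x : ℝ, y = u x + ∫ ω, u (lam * ξ₁ ω + (1 - lam) * ξ₂ ω - x) ∂μ}
    with hS
  -- key pointwise bound
  have key : ∀ x₁ x₂ : ℝ,
      lam * (u x₁ + ∫ ω, u (ξ₁ ω - x₁) ∂μ) + (1 - lam) * (u x₂ + ∫ ω, u (ξ₂ ω - x₂) ∂μ) ≤ S := by
    intro x₁ x₂
    have hcu : u (lam * x₁ + (1 - lam) * x₂) ≥ lam * u x₁ + (1 - lam) * u x₂ :=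
      hu.2 (Set.mem_univ x₁) (Set.mem_univ x₂) hl0.le hl1'.le (by ring)
    have hptw : ∀ ω, lam * u (ξ₁ ω - x₁) + (1 - lam) * u (ξ₂ ω - x₂) ≤
        u (lam * ξ₁ ω + (1 - lam) * ξ₂ ω - (lam * x₁ + (1 - lam) * x₂)) := by
      intro ω
      have := hu.2 (Set.mem_univ (ξ₁ ω - x₁)) (Set.mem_univ (ξ₂ ω - x₂)) hl0.le hl1'.le
        (by ring)
      calc lam * u (ξ₁ ω - x₁) + (1 - lam) * u (ξ₂ ω - x₂)
          ≤ u (lam • (ξ₁ ω - x₁) + (1 - lam) • (ξ₂ ω - x₂)) := this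
        _ = u (lam * ξ₁ ω + (1 - lam) * ξ₂ ω - (lam * x₁ + (1 - lam) * x₂)) := by
            simp only [smul_eq_mul]; ring_nf
    have hintR : Integrable (fun ω => lam * u (ξ₁ ω - x₁) + (1 - lam) * u (ξ₂ ω - x₂)) μ :=
      ((hint₁ x₁).const_mul lam).add ((hint₂ x₂).const_mul (1 - lam))
    have hI : ∫ ω, (lam * u (ξ₁ ω - x₁) + (1 - lam) * u (ξ₂ ω - x₂)) ∂μ ≤
        ∫ ω, u (lam * ξ₁ ω + (1 - lam) * ξ₂ ω - (lam * x₁ + (1 - lam) * x₂)) ∂μ :=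
      integral_mono hintR (hintc _) hptw
    have hIsplit : ∫ ω, (lam * u (ξ₁ ω - x₁) + (1 - lam) * u (ξ₂ ω - x₂)) ∂μ =
        lam * ∫ ω, u (ξ₁ ω - x₁) ∂μ + (1 - lam) * ∫ ω, u (ξ₂ ω - x₂) ∂μ := by
      rw [integral_add ((hint₁ x₁).const_mul lam) ((hint₂ x₂).const_mul (1 - lam)),
        integral_const_mul, integral_const_mul]
    have hmem : u (lam * x₁ + (1 - lam) * x₂) +
        ∫ ω, u (lam * ξ₁ ω + (1 - lam) * ξ₂ ω - (lam * x₁ + (1 - lam) * x₂)) ∂μ ≤ S :=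
      le_csSup hbddc ⟨lam * x₁ + (1 - lam) * x₂, rfl⟩
    have := hI
    rw [hIsplit] at this
    nlinarith [hcu, this, hmem]
  -- now take sups
  have hne₁ : {y : ℝ | ∃ x : ℝ, y = u x + ∫ ω, u (ξ₁ ω - x) ∂μ}.Nonempty :=
    ⟨_, 0, rfl⟩
  have hne₂ : {y : ℝ | ∃ x : ℝ, y = u x + ∫ ω, u (ξ₂ ω - x) ∂μ}.Nonempty :=
    ⟨_, 0, rfl⟩
  have h1 : sSup {y : ℝ | ∃ x : ℝ, y = u x + ∫ ω, u (ξ₁ ω - x) ∂μ} ≤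
      (S - (1 - lam) * sSup {y : ℝ | ∃ x : ℝ, y = u x + ∫ ω, u (ξ₂ ω - x) ∂μ}) / lam := by
    apply csSup_le hne₁
    rintro a ⟨x₁, rfl⟩
    rw [le_div_iff₀ hl0]
    have h2 : sSup {y : ℝ | ∃ x : ℝ, y = u x + ∫ ω, u (ξ₂ ω - x) ∂μ} ≤
        (S - lam * (u x₁ + ∫ ω, u (ξ₁ ω - x₁) ∂μ)) / (1 - lam) := by
      apply csSup_le hne₂
      rintro b ⟨x₂, rfl⟩
      rw [le_div_iff₀ hl1']
      have := key x₁ x₂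
      linarith
    rw [le_div_iff₀ hl1'] at h2
    linarith
  rw [le_div_iff₀ hl0] at h1
  linarith
end

section
/- Let u : ℝ → ℝ be concave with u(0) ≥ 0, and define M_u(ξ) := sup_{x ∈ ℝ} { u(x) + E[u(ξ - x)] }. Then M_u(δξ) ≤ δ M_u(ξ) for all δ ≥ 1, and M_u(δξ) ≥ δ M_u(ξ) for all δ ∈ (0, 1]. -/
/-!
For `0 < a ≤ b`, concavity of `u` together with `u 0 ≥ 0` gives `a * u (b * y) ≤ b * u (a * y)`
(compare `b * y` with `0`). Applied to both terms of `u x + E[u (b ξ - x)]` after the change of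
variable `x = b y`, this shows `a * M_u(b ξ) ≤ b * M_u(a ξ)`, i.e. `δ ↦ M_u(δ ξ) / δ` is
nonincreasing; comparing `δ` with `1` gives both inequalities.
-/

open MeasureTheory

namespace ConcaveOn

theorem mul_map_mul_le {u : ℝ → ℝ} (hu : ConcaveOn ℝ Set.univ u) (h0 : 0 ≤ u 0)
    {a b : ℝ} (ha : 0 ≤ a) (hab : a ≤ b) (y : ℝ) : a * u (b * y) ≤ b * u (a * y) := by
  have hb : 0 < b ∨ b = 0 := (ha.trans hab).lt_or_eq'
  rcases hb with hb | rfl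
  · have ht : 0 ≤ 1 - a / b := sub_nonneg.2 ((div_le_one hb).2 hab)
    have hconc := hu.2 (Set.mem_univ (b * y)) (Set.mem_univ 0) (div_nonneg ha hb.le) ht
      (add_sub_cancel _ _)
    have hpoint : (a / b) • (b * y) + (1 - a / b) • (0 : ℝ) = a * y := by
      simp only [smul_eq_mul, mul_zero, add_zero]
      field_simp
    rw [hpoint, smul_eq_mul, smul_eq_mul] at hconc
    have hchord : a / b * u (b * y) ≤ u (a * y) := by linarith [mul_nonneg ht h0]
    calc a * u (b * y) = b * (a / b * u (b * y)) := by field_simp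
      _ ≤ b * u (a * y) := by gcongr
  · obtain rfl : a = 0 := le_antisymm hab ha
    simp

end ConcaveOn

section

variable {Ω : Type*} [MeasurableSpace Ω]

noncomputable def moce (μ : Measure Ω) (u : ℝ → ℝ) (X : Ω → ℝ) : ℝ :=
  sSup {y : ℝ | ∃ x : ℝ, y = u x + ∫ ω, u (X ω - x) ∂μ}

theorem mul_moce_mul_le {μ : Measure Ω} {u : ℝ → ℝ} (hu : ConcaveOn ℝ Set.univ u)
    (h0 : 0 ≤ u 0) {ξ : Ω → ℝ} {a b : ℝ} (ha : 0 < a) (hab : a ≤ b)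
    (hintb : ∀ x, Integrable (fun ω => u (b * ξ ω - x)) μ)
    (hinta : ∀ x, Integrable (fun ω => u (a * ξ ω - x)) μ)
    (hbdd : BddAbove {y : ℝ | ∃ x : ℝ, y = u x + ∫ ω, u (a * ξ ω - x) ∂μ}) :
    a * moce μ u (fun ω => b * ξ ω) ≤ b * moce μ u (fun ω => a * ξ ω) := by
  have hb : 0 < b := ha.trans_le hab
  rw [mul_comm, ← le_div_iff₀ ha]
  refine csSup_le ⟨_, 0, rfl⟩ ?_
  rintro _ ⟨x, rfl⟩
  rw [le_div_iff₀ ha, mul_comm]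
  obtain ⟨y, rfl⟩ : ∃ y, x = b * y := ⟨x / b, (mul_div_cancel₀ x hb.ne').symm⟩
  have hint : a * ∫ ω, u (b * ξ ω - b * y) ∂μ ≤ b * ∫ ω, u (a * ξ ω - a * y) ∂μ := by
    rw [← integral_const_mul, ← integral_const_mul]
    refine integral_mono ((hintb (b * y)).const_mul a) ((hinta (a * y)).const_mul b) fun ω => ?_
    simpa only [mul_sub] using hu.mul_map_mul_le h0 ha.le hab (ξ ω - y)
  calc a * (u (b * y) + ∫ ω, u (b * ξ ω - b * y) ∂μ)
      ≤ b * (u (a * y) + ∫ ω, u (a * ξ ω - a * y) ∂μ) := by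
        rw [mul_add, mul_add]
        exact add_le_add (hu.mul_map_mul_le h0 ha.le hab y) hint
    _ ≤ b * moce μ u (fun ω => a * ξ ω) :=
        mul_le_mul_of_nonneg_left (le_csSup hbdd ⟨a * y, rfl⟩) hb.le

end

theorem stmt5_general {Ω : Type*} [MeasurableSpace Ω] (μ : Measure Ω)
    (u : ℝ → ℝ) (hu : ConcaveOn ℝ Set.univ u) (h0 : 0 ≤ u 0) (ξ : Ω → ℝ)
    (hint : ∀ δ x : ℝ, Integrable (fun ω => u (δ * ξ ω - x)) μ)
    (hbdd : ∀ δ : ℝ, BddAbove {y : ℝ | ∃ x : ℝ, y = u x + ∫ ω, u (δ * ξ ω - x) ∂μ}) :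
    (∀ δ : ℝ, 1 ≤ δ →
        sSup {y : ℝ | ∃ x : ℝ, y = u x + ∫ ω, u (δ * ξ ω - x) ∂μ} ≤
          δ * sSup {y : ℝ | ∃ x : ℝ, y = u x + ∫ ω, u (ξ ω - x) ∂μ}) ∧
      (∀ δ : ℝ, 0 < δ → δ ≤ 1 →
        sSup {y : ℝ | ∃ x : ℝ, y = u x + ∫ ω, u (δ * ξ ω - x) ∂μ} ≥
          δ * sSup {y : ℝ | ∃ x : ℝ, y = u x + ∫ ω, u (ξ ω - x) ∂μ}) := by
  have hmono {a b : ℝ} (ha : 0 < a) (hab : a ≤ b) :=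
    mul_moce_mul_le hu h0 ha hab (hint b) (hint a) (hbdd a)
  refine ⟨fun δ hδ => ?_, fun δ hδ0 hδ1 => ?_⟩
  · simpa only [one_mul, moce] using hmono one_pos hδ
  · simpa only [one_mul, moce] using hmono hδ0 hδ1

theorem stmt5 {Ω : Type*} [MeasurableSpace Ω] (μ : Measure Ω) [IsProbabilityMeasure μ]
    (u : ℝ → ℝ) (hu : ConcaveOn ℝ Set.univ u) (h0 : 0 ≤ u 0) (ξ : Ω → ℝ)
    (hint : ∀ δ x : ℝ, Integrable (fun ω => u (δ * ξ ω - x)) μ)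
    (hbdd : ∀ δ : ℝ, BddAbove {y : ℝ | ∃ x : ℝ, y = u x + ∫ ω, u (δ * ξ ω - x) ∂μ}) :
    (∀ δ : ℝ, 1 ≤ δ →
        sSup {y : ℝ | ∃ x : ℝ, y = u x + ∫ ω, u (δ * ξ ω - x) ∂μ} ≤
          δ * sSup {y : ℝ | ∃ x : ℝ, y = u x + ∫ ω, u (ξ ω - x) ∂μ}) ∧
      (∀ δ : ℝ, 0 < δ → δ ≤ 1 →
        sSup {y : ℝ | ∃ x : ℝ, y = u x + ∫ ω, u (δ * ξ ω - x) ∂μ} ≥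
          δ * sSup {y : ℝ | ∃ x : ℝ, y = u x + ∫ ω, u (ξ ω - x) ∂μ}) :=
  stmt5_general μ u hu h0 ξ hint hbdd
end

section
/- Let u : ℝ → ℝ be strictly concave and nondecreasing, and let ξ be a random variable supported on a compact interval [ξ_min, ξ_max]. If x* maximizes x ↦ u(x) + E[u(ξ - x)] over ℝ, then x* ∈ [ξ_min/2, ξ_max/2]. Consequently M_u(ξ) = sup_{x ∈ [ξ_min/2, ξ_max/2]} { u(x) + E[u(ξ - x)] }. -/
/-!
If `x* < ξ_min / 2`, put `m = ξ_min / 2`. Since `m ≤ ξ - m`, concavity of `u` gives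
`u (ξ - x*) + u m ≤ u (ξ - m) + u (2m - x*)` pointwise, and strict concavity at the midpoint `m`
of `x*` and `2m - x*` gives `u x* + u (2m - x*) < 2 u m`. Taking expectations and adding, `m`
strictly beats `x*`. The case `x* > ξ_max / 2` is the same exchange argument with the roles of
the outer points swapped. Once the maximum is attained in `[ξ_min / 2, ξ_max / 2]`, both suprema
equal it.
-/

open MeasureTheory

theorem ConcaveOn.map_add_map_le {s : Set ℝ} {u : ℝ → ℝ} (hu : ConcaveOn ℝ s u)
    {a b c d : ℝ} (ha : a ∈ s) (hd : d ∈ s) (hab : a ≤ b) (hac : a ≤ c)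
    (hsum : b + c = a + d) :
    u a + u d ≤ u b + u c := by
  obtain rfl : c = a + d - b := by linarith
  rcases hab.eq_or_lt with rfl | hab
  · simp
  have had : 0 < d - a := by linarith
  set t := (b - a) / (d - a)
  have ht : 0 ≤ t := div_nonneg (sub_nonneg.2 hab.le) had.le
  have ht' : 0 ≤ 1 - t := by rw [sub_nonneg, div_le_one had]; linarith
  have hb : (1 - t) • a + t • d = b := by simp only [t, smul_eq_mul]; field
  have hc : t • a + (1 - t) • d = a + d - b := by simp only [t, smul_eq_mul]; field
  have hub := hu.2 ha hd ht' ht (sub_add_cancel 1 t)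
  have huc := hu.2 ha hd ht ht' (add_sub_cancel t 1)
  rw [hb] at hub
  rw [hc] at huc
  simp only [smul_eq_mul] at hub huc
  linarith

theorem StrictConcaveOn.add_lt_two_mul_map_midpoint {s : Set ℝ} {u : ℝ → ℝ}
    (hu : StrictConcaveOn ℝ s u) {x y : ℝ} (hx : x ∈ s) (hy : y ∈ s) (hxy : x ≠ y) :
    u x + u y < 2 * u ((x + y) / 2) := by
  have h := hu.2 hx hy hxy one_half_pos one_half_pos (add_halves 1)
  have : (1 / 2 : ℝ) • x + (1 / 2 : ℝ) • y = (x + y) / 2 := by simp only [smul_eq_mul]; ring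
  rw [this] at h
  simp only [smul_eq_mul] at h
  linarith

section SplitUtility

variable {Ω : Type*} [MeasurableSpace Ω] (μ : Measure Ω) (u : ℝ → ℝ) (ξ : Ω → ℝ)

/-- `M_u(ξ) = sup_x splitUtility μ u ξ x`. -/
noncomputable def splitUtility (x : ℝ) : ℝ := u x + ∫ ω, u (ξ ω - x) ∂μ

variable {μ u ξ} [IsProbabilityMeasure μ] {x m : ℝ}

theorem splitUtility_lt_of_exchange (hu : StrictConcaveOn ℝ Set.univ u)
    (hx : Integrable (fun ω => u (ξ ω - x)) μ) (hm : Integrable (fun ω => u (ξ ω - m)) μ)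
    (hxm : x ≠ m) (hex : ∀ᵐ ω ∂μ, u (ξ ω - x) + u m ≤ u (ξ ω - m) + u (2 * m - x)) :
    splitUtility μ u ξ x < splitUtility μ u ξ m := by
  have hmid : u x + u (2 * m - x) < 2 * u m := by
    simpa using hu.add_lt_two_mul_map_midpoint trivial trivial (x := x) (y := 2 * m - x)
      (by contrapose! hxm; linarith)
  have hexp : ∫ ω, u (ξ ω - x) ∂μ + u m ≤ ∫ ω, u (ξ ω - m) ∂μ + u (2 * m - x) := by
    have := integral_mono_ae (hx.add (integrable_const (u m))) (hm.add (integrable_const _)) hex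
    simpa [integral_add hx (integrable_const _), integral_add hm (integrable_const _)] using this
  unfold splitUtility
  linarith

theorem splitUtility_lt_of_lt_of_two_mul_le (hu : StrictConcaveOn ℝ Set.univ u)
    (hx : Integrable (fun ω => u (ξ ω - x)) μ) (hm : Integrable (fun ω => u (ξ ω - m)) μ)
    (hxm : x < m) (hξ : ∀ᵐ ω ∂μ, 2 * m ≤ ξ ω) :
    splitUtility μ u ξ x < splitUtility μ u ξ m := by
  refine splitUtility_lt_of_exchange hu hx hm hxm.ne (hξ.mono fun ω hω => ?_)
  have := hu.concaveOn.map_add_map_le trivial trivial (a := m) (b := ξ ω - m) (c := 2 * m - x)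
    (d := ξ ω - x) (by linarith) (by linarith) (by ring)
  linarith

theorem splitUtility_lt_of_lt_of_le_two_mul (hu : StrictConcaveOn ℝ Set.univ u)
    (hx : Integrable (fun ω => u (ξ ω - x)) μ) (hm : Integrable (fun ω => u (ξ ω - m)) μ)
    (hmx : m < x) (hξ : ∀ᵐ ω ∂μ, ξ ω ≤ 2 * m) :
    splitUtility μ u ξ x < splitUtility μ u ξ m := by
  refine splitUtility_lt_of_exchange hu hx hm hmx.ne' (hξ.mono fun ω hω => ?_)
  have := hu.concaveOn.map_add_map_le trivial trivial (a := ξ ω - x) (b := ξ ω - m)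
    (c := 2 * m - x) (d := m) (by linarith) (by linarith) (by ring)
  linarith

theorem mem_Icc_half_of_forall_splitUtility_le (hu : StrictConcaveOn ℝ Set.univ u)
    (hint : ∀ x, Integrable (fun ω => u (ξ ω - x)) μ) {ξmin ξmax : ℝ}
    (hξ : ∀ᵐ ω ∂μ, ξ ω ∈ Set.Icc ξmin ξmax)
    (hmax : ∀ y, splitUtility μ u ξ y ≤ splitUtility μ u ξ x) :
    x ∈ Set.Icc (ξmin / 2) (ξmax / 2) := by
  constructor
  · by_contra! hlt
    refine (hmax _).not_gt (splitUtility_lt_of_lt_of_two_mul_le hu (hint x) (hint _) hlt ?_)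
    filter_upwards [hξ] with ω hω using by linarith [hω.1]
  · by_contra! hlt
    refine (hmax _).not_gt (splitUtility_lt_of_lt_of_le_two_mul hu (hint x) (hint _) hlt ?_)
    filter_upwards [hξ] with ω hω using by linarith [hω.2]

end SplitUtility

theorem stmt8_general {Ω : Type*} [MeasurableSpace Ω] (μ : Measure Ω) [IsProbabilityMeasure μ]
    (u : ℝ → ℝ) (hconc : StrictConcaveOn ℝ Set.univ u)
    (ξ : Ω → ℝ) (ξmin ξmax : ℝ) (hsupp : ∀ ω, ξ ω ∈ Set.Icc ξmin ξmax)
    (hint : ∀ x : ℝ, Integrable (fun ω => u (ξ ω - x)) μ)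
    (xstar : ℝ)
    (hmax : ∀ x : ℝ, u x + ∫ ω, u (ξ ω - x) ∂μ ≤ u xstar + ∫ ω, u (ξ ω - xstar) ∂μ) :
    xstar ∈ Set.Icc (ξmin / 2) (ξmax / 2) ∧
      sSup {y : ℝ | ∃ x : ℝ, y = u x + ∫ ω, u (ξ ω - x) ∂μ} =
        sSup {y : ℝ | ∃ x ∈ Set.Icc (ξmin / 2) (ξmax / 2),
          y = u x + ∫ ω, u (ξ ω - x) ∂μ} := by
  have hmem : xstar ∈ Set.Icc (ξmin / 2) (ξmax / 2) :=
    mem_Icc_half_of_forall_splitUtility_le hconc hint (.of_forall hsupp) hmax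
  refine ⟨hmem, ?_⟩
  have hall : IsGreatest {y : ℝ | ∃ x : ℝ, y = u x + ∫ ω, u (ξ ω - x) ∂μ}
      (u xstar + ∫ ω, u (ξ ω - xstar) ∂μ) :=
    ⟨⟨xstar, rfl⟩, by rintro y ⟨x, rfl⟩; exact hmax x⟩
  have hIcc : IsGreatest {y : ℝ | ∃ x ∈ Set.Icc (ξmin / 2) (ξmax / 2),
      y = u x + ∫ ω, u (ξ ω - x) ∂μ} (u xstar + ∫ ω, u (ξ ω - xstar) ∂μ) :=
    ⟨⟨xstar, hmem, rfl⟩, by rintro y ⟨x, -, rfl⟩; exact hmax x⟩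
  rw [hall.csSup_eq, hIcc.csSup_eq]

theorem stmt8 {Ω : Type*} [MeasurableSpace Ω] (μ : Measure Ω) [IsProbabilityMeasure μ]
    (u : ℝ → ℝ) (hconc : StrictConcaveOn ℝ Set.univ u) (hmono : Monotone u)
    (ξ : Ω → ℝ) (ξmin ξmax : ℝ) (hsupp : ∀ ω, ξ ω ∈ Set.Icc ξmin ξmax)
    (hint : ∀ x : ℝ, Integrable (fun ω => u (ξ ω - x)) μ)
    (xstar : ℝ)
    (hmax : ∀ x : ℝ, u x + ∫ ω, u (ξ ω - x) ∂μ ≤ u xstar + ∫ ω, u (ξ ω - xstar) ∂μ) :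
    xstar ∈ Set.Icc (ξmin / 2) (ξmax / 2) ∧
      sSup {y : ℝ | ∃ x : ℝ, y = u x + ∫ ω, u (ξ ω - x) ∂μ} =
        sSup {y : ℝ | ∃ x ∈ Set.Icc (ξmin / 2) (ξmax / 2),
          y = u x + ∫ ω, u (ξ ω - x) ∂μ} :=
  stmt8_general μ u hconc ξ ξmin ξmax hsupp hint xstar hmax
end
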